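/- arXiv:2207.01557 — 3 statements merged into one kernel-verified Lean document; each statement's English description precedes it below -/
import Mathlib

section
/- Let S^t ⊆ E be a nonempty convex cone (i.e., λ e ∈ S^t whenever e ∈ S^t and λ > 0), let ε ∈ E, and suppose ε^t ∈ S^t minimizes e ↦ ⟨C(ε − e), ε − e⟩ over S^t. Then, setting ε^c = ε − ε^t, the orthogonality condition ⟨C ε^t, ε^c⟩ = 0 holds (equivalently ⟨C ε^c, ε^t⟩ = 0 by self-adjointness of C). -/
open RealInnerProductSpace

/-- Let `S` (= S^t) be a nonempty convex cone (i.e. `l • e ∈ S` whenever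
`e ∈ S` and `l > 0`) in a finite-dimensional real inner product space `E`, let `ε ∈ E`, and
suppose `εt ∈ S` minimizes `e ↦ ⟨C (ε - e), ε - e⟩` over `S`. Then, setting `εc = ε - εt`,
the orthogonality condition `⟨C εt, εc⟩ = 0` holds (equivalently `⟨C εc, εt⟩ = 0` by
self-adjointness of `C`). -/
theorem energy_projection_orthogonality
    {E : Type*} [NormedAddCommGroup E] [InnerProductSpace ℝ E] [FiniteDimensional ℝ E]
    (C : E →ₗ[ℝ] E)
    (hC_sym : ∀ x y : E, ⟪C x, y⟫ = ⟪x, C y⟫)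
    (hC_pos : ∀ x : E, x ≠ 0 → 0 < ⟪C x, x⟫)
    (S : Set E) (hS_ne : S.Nonempty) (hS_conv : Convex ℝ S)
    (hS_cone : ∀ e ∈ S, ∀ l : ℝ, 0 < l → l • e ∈ S)
    (ε εt : E) (hεt : εt ∈ S)
    (hmin : ∀ e ∈ S, ⟪C (ε - εt), ε - εt⟫ ≤ ⟪C (ε - e), ε - e⟫) :
    ⟪C εt, ε - εt⟫ = 0 ∧ ⟪C (ε - εt), εt⟫ = 0 := by
  set a := ε - εt with ha
  set B : ℝ := ⟪C a, εt⟫ with hB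
  set c : ℝ := ⟪C εt, εt⟫ with hc
  have hc_nonneg : 0 ≤ c := by
    rcases eq_or_ne εt 0 with h | h
    · simp [hc, h]
    · exact le_of_lt (hC_pos εt h)
  -- key inequality from minimality along the cone direction
  have key : ∀ s : ℝ, s < 1 → 0 ≤ 2 * s * B + s ^ 2 * c := by
    intro s hs
    have hl : (0 : ℝ) < 1 - s := by linarith
    have hmem := hS_cone εt hεt (1 - s) hl
    have h := hmin _ hmem
    have hexp : ε - (1 - s) • εt = a + s • εt := by
      rw [ha]; module
    rw [hexp] at h
    have hsym : ⟪C εt, a⟫ = B := by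
      rw [hC_sym, real_inner_comm]
    have hexpand : ⟪C (a + s • εt), a + s • εt⟫
        = ⟪C a, a⟫ + s * B + s * B + s * s * c := by
      simp only [map_add, map_smul, inner_add_left, inner_add_right,
        real_inner_smul_left, real_inner_smul_right, hsym, ← hB]
      ring
    rw [hexpand] at h
    nlinarith [h]
  have hB0 : B = 0 := by
    by_contra hBne
    set δ : ℝ := 1 / (c + |B| + 1) with hδ
    have habs : 0 < |B| := abs_pos.mpr hBne
    have hden : 0 < c + |B| + 1 := by linarith
    have hδpos : 0 < δ := by positivity
    have hs1 : -B * δ < 1 := by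
      have h1 : |(-B) * δ| < 1 := by
        rw [abs_mul, abs_neg, abs_of_pos hδpos, hδ, mul_one_div, div_lt_one hden]
        linarith
      calc -B * δ ≤ |(-B) * δ| := le_abs_self _
        _ < 1 := h1
    have h := key (-B * δ) hs1
    have hδc : δ * c < 2 := by
      rw [hδ, div_mul_eq_mul_div, one_mul, div_lt_iff₀ hden]
      linarith
    have hB2 : 0 < B * B := mul_self_pos.mpr hBne
    nlinarith [mul_pos (mul_pos hB2 hδpos) (show (0:ℝ) < 2 - δ * c by linarith)]
  constructor
  · rw [hC_sym, real_inner_comm]; exact hB0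
  · exact hB0
end

section
/- For any real symmetric n×n matrix Ã (n ≥ 1), the volumetric–deviatoric crack-driving part Ã^t is the unique minimizer of e ↦ ‖Ã − e‖_F over the closed convex cone of real symmetric n×n matrices e with tr e ≥ 0, i.e., Ã^t is the orthogonal projection of Ã onto that cone with respect to the Frobenius inner product. -/
open Matrix

/-- The Frobenius inner product `⟨X, Y⟩_F = tr(Xᵀ Y)` on real `n × n` matrices. -/
noncomputable def frobInner {n : ℕ} (X Y : Matrix (Fin n) (Fin n) ℝ) : ℝ :=
  (Xᵀ * Y).trace

/-- The Frobenius norm `‖X‖_F = √⟨X, X⟩_F` on real `n × n` matrices. -/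
noncomputable def frobNorm {n : ℕ} (X : Matrix (Fin n) (Fin n) ℝ) : ℝ :=
  Real.sqrt (frobInner X X)

/-!
The difference `A - Ãᵗ = (1/n)⟨tr A⟩₋ I` is a nonpositive multiple of the identity, and
`⟨tr A⟩₋ ⟨tr A⟩₊ = 0`, so for every `e` with `tr e ≥ 0`
`⟨A - Ãᵗ, e - Ãᵗ⟩_F = (1/n)⟨tr A⟩₋ (tr e - ⟨tr A⟩₊) = (1/n)⟨tr A⟩₋ tr e ≤ 0`.
This obtuse-angle condition and the Pythagorean expansion of `‖(A - Ãᵗ) + (Ãᵗ - e)‖_F²` give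
`‖A - Ãᵗ‖_F² + ‖Ãᵗ - e‖_F² ≤ ‖A - e‖_F²`, hence both minimality and uniqueness.
-/

namespace Matrix

variable {n : ℕ}

section Frobenius

variable {X A P E : Matrix (Fin n) (Fin n) ℝ}

theorem frobInner_comm (X Y : Matrix (Fin n) (Fin n) ℝ) : frobInner X Y = frobInner Y X := by
  rw [frobInner, ← trace_transpose, transpose_mul, transpose_transpose, frobInner]

theorem frobInner_neg_right (X Y : Matrix (Fin n) (Fin n) ℝ) :
    frobInner X (-Y) = -frobInner X Y := by
  simp only [frobInner, Matrix.mul_neg, trace_neg]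

theorem frobInner_add_add_self (X Y : Matrix (Fin n) (Fin n) ℝ) :
    frobInner (X + Y) (X + Y) = frobInner X X + 2 * frobInner X Y + frobInner Y Y := by
  have hcomm := frobInner_comm Y X
  simp only [frobInner, transpose_add, Matrix.add_mul, Matrix.mul_add, trace_add] at hcomm ⊢
  linarith

theorem frobInner_smul_one_left (c : ℝ) (Y : Matrix (Fin n) (Fin n) ℝ) :
    frobInner (c • (1 : Matrix (Fin n) (Fin n) ℝ)) Y = c * Y.trace := by
  simp [frobInner]

theorem frobInner_self_nonneg (X : Matrix (Fin n) (Fin n) ℝ) : 0 ≤ frobInner X X :=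
  (posSemidef_conjTranspose_mul_self X).trace_nonneg

theorem frobNorm_nonneg (X : Matrix (Fin n) (Fin n) ℝ) : 0 ≤ frobNorm X :=
  Real.sqrt_nonneg _

theorem sq_frobNorm (X : Matrix (Fin n) (Fin n) ℝ) : frobNorm X ^ 2 = frobInner X X :=
  Real.sq_sqrt (frobInner_self_nonneg X)

theorem frobNorm_eq_zero : frobNorm X = 0 ↔ X = 0 := by
  rw [frobNorm, Real.sqrt_eq_zero (frobInner_self_nonneg X), frobInner,
    ← conjTranspose_eq_transpose_of_trivial, trace_conjTranspose_mul_self_eq_zero_iff]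

theorem sq_frobNorm_sub_add_sq_le (h : frobInner (A - P) (E - P) ≤ 0) :
    frobNorm (A - P) ^ 2 + frobNorm (P - E) ^ 2 ≤ frobNorm (A - E) ^ 2 := by
  have hsplit : A - E = (A - P) + (P - E) := by abel
  have hcross : frobInner (A - P) (P - E) = -frobInner (A - P) (E - P) := by
    rw [← neg_sub E P, frobInner_neg_right]
  rw [sq_frobNorm, sq_frobNorm, sq_frobNorm, hsplit, frobInner_add_add_self, hcross]
  linarith

theorem frobNorm_sub_le_of_frobInner_nonpos (h : frobInner (A - P) (E - P) ≤ 0) :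
    frobNorm (A - P) ≤ frobNorm (A - E) := by
  refine (pow_le_pow_iff_left₀ (frobNorm_nonneg _) (frobNorm_nonneg _) two_ne_zero).mp ?_
  nlinarith [sq_frobNorm_sub_add_sq_le h, sq_nonneg (frobNorm (P - E))]

theorem eq_of_frobInner_nonpos_of_frobNorm_sub_le (h : frobInner (A - P) (E - P) ≤ 0)
    (hE : frobNorm (A - E) ≤ frobNorm (A - P)) : E = P := by
  have hsq : frobNorm (P - E) ^ 2 ≤ 0 := by
    nlinarith [sq_frobNorm_sub_add_sq_le h, pow_le_pow_left₀ (frobNorm_nonneg _) hE 2]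
  have hzero : frobNorm (P - E) = 0 :=
    pow_eq_zero_iff two_ne_zero |>.mp (le_antisymm hsq (sq_nonneg _))
  exact (sub_eq_zero.mp (frobNorm_eq_zero.mp hzero)).symm

end Frobenius

section Tensile

/-- The crack-driving part `Ãᵗ` of the volumetric–deviatoric split. -/
noncomputable def tensilePart (A : Matrix (Fin n) (Fin n) ℝ) : Matrix (Fin n) (Fin n) ℝ :=
  (max A.trace 0 / (n : ℝ)) • (1 : Matrix (Fin n) (Fin n) ℝ) +
    (A - (A.trace / (n : ℝ)) • (1 : Matrix (Fin n) (Fin n) ℝ))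

variable {A : Matrix (Fin n) (Fin n) ℝ}

theorem IsSymm.tensilePart (hA : A.IsSymm) : (tensilePart A).IsSymm := by
  simp [Matrix.tensilePart, IsSymm, hA.eq]

theorem sub_tensilePart (A : Matrix (Fin n) (Fin n) ℝ) :
    A - tensilePart A = (min A.trace 0 / (n : ℝ)) • (1 : Matrix (Fin n) (Fin n) ℝ) := by
  have hmin : min A.trace 0 = A.trace - max A.trace 0 := by
    linarith [min_add_max A.trace 0]
  rw [tensilePart, hmin, sub_div, sub_smul]
  module

theorem trace_tensilePart (hn : n ≠ 0) (A : Matrix (Fin n) (Fin n) ℝ) :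
    (tensilePart A).trace = max A.trace 0 := by
  have hn' : (n : ℝ) ≠ 0 := Nat.cast_ne_zero.mpr hn
  simp only [tensilePart, trace_add, trace_sub, trace_smul, trace_one, Fintype.card_fin,
    smul_eq_mul]
  field_simp
  ring

theorem frobInner_sub_tensilePart_nonpos (hn : n ≠ 0) (A : Matrix (Fin n) (Fin n) ℝ)
    {E : Matrix (Fin n) (Fin n) ℝ} (hE : 0 ≤ E.trace) :
    frobInner (A - tensilePart A) (E - tensilePart A) ≤ 0 := by
  rw [sub_tensilePart, frobInner_smul_one_left, trace_sub, trace_tensilePart hn]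
  rcases le_total A.trace 0 with h | h
  · rw [min_eq_left h, max_eq_right h, sub_zero]
    exact mul_nonpos_of_nonpos_of_nonneg (div_nonpos_of_nonpos_of_nonneg h n.cast_nonneg) hE
  · simp [min_eq_right h]

end Tensile

end Matrix

/-- For any real symmetric `n × n` matrix `A` (`n ≥ 1`), the
volumetric–deviatoric crack-driving part `At = (1/n)⟨tr A⟩₊ I + dev A` is the unique minimizer
of `e ↦ ‖A - e‖_F` over the closed convex cone of real symmetric `n × n` matrices `e` with
`tr e ≥ 0`, i.e. `At` is the orthogonal projection of `A` onto that cone with respect to the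
Frobenius inner product. -/
theorem volumetric_deviatoric_is_projection
    {n : ℕ} (hn : 1 ≤ n) (A : Matrix (Fin n) (Fin n) ℝ) (hA : A.IsSymm)
    (At : Matrix (Fin n) (Fin n) ℝ)
    (hAt : At = (max A.trace 0 / (n : ℝ)) • (1 : Matrix (Fin n) (Fin n) ℝ) +
      (A - (A.trace / (n : ℝ)) • (1 : Matrix (Fin n) (Fin n) ℝ))) :
    (At.IsSymm ∧ 0 ≤ At.trace) ∧
      (∀ e : Matrix (Fin n) (Fin n) ℝ, e.IsSymm → 0 ≤ e.trace →
        frobNorm (A - At) ≤ frobNorm (A - e)) ∧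
      (∀ m : Matrix (Fin n) (Fin n) ℝ, m.IsSymm → 0 ≤ m.trace →
        (∀ e : Matrix (Fin n) (Fin n) ℝ, e.IsSymm → 0 ≤ e.trace →
          frobNorm (A - m) ≤ frobNorm (A - e)) → m = At) := by
  have hn0 : n ≠ 0 := Nat.one_le_iff_ne_zero.mp hn
  obtain rfl : At = tensilePart A := hAt
  have hsymm : (tensilePart A).IsSymm := hA.tensilePart
  have htrace : 0 ≤ (tensilePart A).trace := trace_tensilePart hn0 A ▸ le_max_right _ _
  refine ⟨⟨hsymm, htrace⟩, fun e _ he => ?_, fun m _ hm hmin => ?_⟩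
  · exact frobNorm_sub_le_of_frobInner_nonpos (frobInner_sub_tensilePart_nonpos hn0 A he)
  · exact eq_of_frobInner_nonpos_of_frobNorm_sub_le (frobInner_sub_tensilePart_nonpos hn0 A hm)
      (hmin _ hsymm htrace)
end

section
/- Let Ψ^t(ε) = ½‖(√C ε)^t‖² be the crack-driving energy of the anisotropic volumetric–deviatoric model, where (·)^t is the volumetric–deviatoric crack-driving split in the transformed space. Then at every ε₀ ∈ E with tr(√C ε₀) > 0, Ψ^t is differentiable with derivative h ↦ ⟨C ε₀, h⟩ (so the crack-driving stress is σ^t = C ε₀ = C ε^t(ε₀)), and at every ε₀ with tr(√C ε₀) < 0, Ψ^t is differentiable with derivative h ↦ ⟨C ε^t(ε₀), h⟩ where ε^t(ε₀) = (√C)⁻¹ dev(√C ε₀). -/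
/-!
On the open half-space `tr (B ε) > 0` the crack-driving split is the identity, and on
`tr (B ε) < 0` it is the deviatoric projection; so near `ε₀` the energy is a quadratic form
`½ ‖L ε‖²` with `L = B` resp. `L = dev ∘ B`, whose derivative is `h ↦ ⟪L ε₀, L h⟫`. Since `dev`
is the orthogonal projection onto `Iᗮ` and `B` is self-adjoint with `B ∘ B = C`, this is
`⟪C ε₀, h⟫` resp. `⟪B (dev (B ε₀)), h⟫ = ⟪C (B⁻¹ (dev (B ε₀))), h⟫`.
-/

open RealInnerProductSpace

section

variable {E : Type*} [NormedAddCommGroup E] [InnerProductSpace ℝ E]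

theorem hasFDerivAt_half_inner_self (L : E →L[ℝ] E) (x₀ : E) :
    HasFDerivAt (fun x => 1 / 2 * ⟪L x, L x⟫) ((innerSL ℝ (L x₀)).comp L) x₀ := by
  refine ((L.hasFDerivAt.inner ℝ L.hasFDerivAt).const_mul (1 / 2 : ℝ)).congr_fderiv ?_
  ext v
  simp [real_inner_comm (L v) (L x₀)]
  ring

/-- With `⟪I, I⟫ = c`, this is the orthogonal projection onto `Iᗮ`. -/
noncomputable def deviatoricPart (I : E) (c : ℝ) : E →L[ℝ] E :=
  ContinuousLinearMap.id ℝ E - c⁻¹ • (innerSL ℝ I).smulRight I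

theorem deviatoricPart_apply (I : E) (c : ℝ) (x : E) :
    deviatoricPart I c x = x - (⟪I, x⟫ / c) • I := by
  simp [deviatoricPart, smul_smul, div_eq_inv_mul]

section Deviatoric

variable {I : E} {c : ℝ} (hI : ⟪I, I⟫ = c) (hc : c ≠ 0)
include hI hc

theorem inner_deviatoricPart_left_self (x : E) : ⟪deviatoricPart I c x, I⟫ = 0 := by
  rw [deviatoricPart_apply, inner_sub_left, real_inner_smul_left, hI, real_inner_comm]
  field_simp
  ring

theorem inner_deviatoricPart_deviatoricPart (x y : E) :
    ⟪deviatoricPart I c x, deviatoricPart I c y⟫ = ⟪deviatoricPart I c x, y⟫ := by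
  rw [deviatoricPart_apply I c y, inner_sub_right, real_inner_smul_right,
    inner_deviatoricPart_left_self hI hc, mul_zero, sub_zero]

end Deviatoric

noncomputable def crackDrivingPart (I : E) (c : ℝ) (x : E) : E :=
  (max ⟪I, x⟫ 0 / c) • I + deviatoricPart I c x

theorem crackDrivingPart_of_nonneg {I x : E} (c : ℝ) (hx : 0 ≤ ⟪I, x⟫) :
    crackDrivingPart I c x = x := by
  rw [crackDrivingPart, deviatoricPart_apply, max_eq_left hx]
  abel

theorem crackDrivingPart_of_nonpos {I x : E} (c : ℝ) (hx : ⟪I, x⟫ ≤ 0) :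
    crackDrivingPart I c x = deviatoricPart I c x := by
  rw [crackDrivingPart, max_eq_right hx, zero_div, zero_smul, zero_add]

section CrackDrivingEnergy

variable (I : E) (c : ℝ) {B : E →L[ℝ] E} {ε₀ : E}

theorem hasFDerivAt_crackDrivingEnergy_of_trace_pos
    (hB : (B : E →ₗ[ℝ] E).IsSymmetric) (h₀ : 0 < ⟪I, B ε₀⟫) :
    HasFDerivAt (fun ε => 1 / 2 * ⟪crackDrivingPart I c (B ε), crackDrivingPart I c (B ε)⟫)
      (innerSL ℝ (B (B ε₀))) ε₀ := by
  have hlocal : ∀ᶠ ε in nhds ε₀, 0 < ⟪I, B ε⟫ :=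
    (isOpen_lt continuous_const ((innerSL ℝ I).comp B).continuous).mem_nhds h₀
  refine ((hasFDerivAt_half_inner_self B ε₀).congr_of_eventuallyEq ?_).congr_fderiv ?_
  · filter_upwards [hlocal] with ε hε
    rw [crackDrivingPart_of_nonneg c hε.le]
  · ext v
    exact (hB (B ε₀) v).symm

theorem hasFDerivAt_crackDrivingEnergy_of_trace_neg (hI : ⟪I, I⟫ = c) (hc : c ≠ 0)
    (hB : (B : E →ₗ[ℝ] E).IsSymmetric) (h₀ : ⟪I, B ε₀⟫ < 0) :
    HasFDerivAt (fun ε => 1 / 2 * ⟪crackDrivingPart I c (B ε), crackDrivingPart I c (B ε)⟫)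
      (innerSL ℝ (B (deviatoricPart I c (B ε₀)))) ε₀ := by
  have hlocal : ∀ᶠ ε in nhds ε₀, ⟪I, B ε⟫ < 0 :=
    (isOpen_lt ((innerSL ℝ I).comp B).continuous continuous_const).mem_nhds h₀
  refine ((hasFDerivAt_half_inner_self ((deviatoricPart I c).comp B) ε₀).congr_of_eventuallyEq
    ?_).congr_fderiv ?_
  · filter_upwards [hlocal] with ε hε
    rw [crackDrivingPart_of_nonpos c hε.le]
    rfl
  · ext v
    simp only [ContinuousLinearMap.coe_comp, Function.comp_apply, innerSL_apply_apply]
    rw [inner_deviatoricPart_deviatoricPart hI hc]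
    exact (hB _ v).symm

end CrackDrivingEnergy

end

theorem crack_driving_energy_hasFDerivAt_general
    {E : Type*} [NormedAddCommGroup E] [InnerProductSpace ℝ E] [FiniteDimensional ℝ E]
    (n : ℕ) (hn : 1 ≤ n) (I : E) (hI : ⟪I, I⟫ = (n : ℝ))
    (C B Binv : E →ₗ[ℝ] E)
    (hB_sym : ∀ x y : E, ⟪B x, y⟫ = ⟪x, B y⟫)
    (hB_sq : ∀ x : E, B (B x) = C x)
    (hBinv₂ : ∀ x : E, B (Binv x) = x)
    (tr : E → ℝ) (htr : ∀ x : E, tr x = ⟪I, x⟫)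
    (dev : E → E) (hdev : ∀ x : E, dev x = x - (tr x / (n : ℝ)) • I)
    (split : E → E) (hsplit : ∀ x : E, split x = (max (tr x) 0 / (n : ℝ)) • I + dev x)
    (Ψt : E → ℝ) (hΨt : ∀ ε : E, Ψt ε = 1 / 2 * ⟪split (B ε), split (B ε)⟫) :
    (∀ ε₀ : E, 0 < tr (B ε₀) →
        HasFDerivAt Ψt (innerSL ℝ (C ε₀) : E →L[ℝ] ℝ) ε₀) ∧
      (∀ ε₀ : E, tr (B ε₀) < 0 →
        HasFDerivAt Ψt (innerSL ℝ (C (Binv (dev (B ε₀)))) : E →L[ℝ] ℝ) ε₀) := by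
  have hn' : (n : ℝ) ≠ 0 := by positivity
  have hdev' : ∀ x, dev x = deviatoricPart I n x := fun x => by
    rw [hdev, htr, deviatoricPart_apply]
  have hΨt' : Ψt = fun ε => 1 / 2 *
      ⟪crackDrivingPart I n (B.toContinuousLinearMap ε),
        crackDrivingPart I n (B.toContinuousLinearMap ε)⟫ := by
    funext ε
    rw [hΨt, hsplit, htr, hdev', crackDrivingPart]
    rfl
  subst hΨt'
  refine ⟨fun ε₀ h₀ => ?_, fun ε₀ h₀ => ?_⟩
  · rw [← hB_sq]
    exact hasFDerivAt_crackDrivingEnergy_of_trace_pos I n hB_sym (htr _ ▸ h₀)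
  · rw [← hB_sq, hBinv₂, hdev']
    exact hasFDerivAt_crackDrivingEnergy_of_trace_neg I n hI hn' hB_sym (htr _ ▸ h₀)

/-- Let `Ψt(ε) = ½‖(√C ε)^t‖²` be the crack-driving energy of the anisotropic
volumetric–deviatoric model, where `(·)^t` is the volumetric–deviatoric crack-driving split in
the transformed space. Then at every `ε₀` with `tr(√C ε₀) > 0`, `Ψt` is differentiable with
derivative `h ↦ ⟨C ε₀, h⟩` (so the crack-driving stress is `σt = C ε₀ = C εt(ε₀)`), and at
every `ε₀` with `tr(√C ε₀) < 0`, `Ψt` is differentiable with derivative `h ↦ ⟨C εt(ε₀), h⟩`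
where `εt(ε₀) = (√C)⁻¹ dev(√C ε₀)`.

Here `E` models the space of real symmetric `n × n` matrices with the Frobenius inner product:
`I ∈ E` plays the role of the identity matrix (`⟨I, I⟩ = n`), the trace is `tr x = ⟨I, x⟩`,
`dev x = x - (tr x / n) • I`, and the crack-driving split is
`x^t = (1/n) max (tr x) 0 • I + dev x`. `B` is the positive self-adjoint square root of the
self-adjoint positive-definite elasticity tensor `C`, with inverse `Binv`. -/
theorem crack_driving_energy_hasFDerivAt
    {E : Type*} [NormedAddCommGroup E] [InnerProductSpace ℝ E] [FiniteDimensional ℝ E]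
    (n : ℕ) (hn : 1 ≤ n) (I : E) (hI : ⟪I, I⟫ = (n : ℝ))
    (C B Binv : E →ₗ[ℝ] E)
    (hC_sym : ∀ x y : E, ⟪C x, y⟫ = ⟪x, C y⟫)
    (hC_pos : ∀ x : E, x ≠ 0 → 0 < ⟪C x, x⟫)
    (hB_sym : ∀ x y : E, ⟪B x, y⟫ = ⟪x, B y⟫)
    (hB_pos : ∀ x : E, x ≠ 0 → 0 < ⟪B x, x⟫)
    (hB_sq : ∀ x : E, B (B x) = C x)
    (hBinv₁ : ∀ x : E, Binv (B x) = x) (hBinv₂ : ∀ x : E, B (Binv x) = x)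
    (tr : E → ℝ) (htr : ∀ x : E, tr x = ⟪I, x⟫)
    (dev : E → E) (hdev : ∀ x : E, dev x = x - (tr x / (n : ℝ)) • I)
    (split : E → E) (hsplit : ∀ x : E, split x = (max (tr x) 0 / (n : ℝ)) • I + dev x)
    (Ψt : E → ℝ) (hΨt : ∀ ε : E, Ψt ε = 1 / 2 * ⟪split (B ε), split (B ε)⟫) :
    (∀ ε₀ : E, 0 < tr (B ε₀) →
        HasFDerivAt Ψt (innerSL ℝ (C ε₀) : E →L[ℝ] ℝ) ε₀) ∧
      (∀ ε₀ : E, tr (B ε₀) < 0 →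
        HasFDerivAt Ψt (innerSL ℝ (C (Binv (dev (B ε₀)))) : E →L[ℝ] ℝ) ε₀) :=
  crack_driving_energy_hasFDerivAt_general n hn I hI C B Binv hB_sym hB_sq hBinv₂ tr htr dev hdev
    split hsplit Ψt hΨt
end
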